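/- Iterated SGD contraction: under the conditions of the previous statement, with i.i.d. samples ξ¹,...,ξᴺ and iterates x^{k+1} = x^k - γ∇_x f(x^k,ξ^k), γ ≤ 1/(2L), one has E[‖x^{N+1} - x*‖₂²] ≤ (1-γμ)^N ‖x¹ - x*‖₂² + 2γσ*²/μ. -/

import Mathlib

/-!
One SGD step contracts in expectation. Expanding the square, the cross term is controlled by
strong convexity, and the second moment of the stochastic gradient by co-coercivity of each convex
`L`-smooth sample loss, `‖∇f(x,ξ) - ∇f(x*,ξ)‖² ≤ 2L (f(x,ξ) - f(x*,ξ) - ⟪∇f(x*,ξ), x - x*⟫)`;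
for `γ ≤ 1/(2L)` this gives `E_ξ ‖x - γ∇f(x,ξ) - x*‖² ≤ (1 - γμ)‖x - x*‖² + 2γ²σ*²`, and `μ ≤ 2L`
makes `1 - γμ ≥ 0`. The iterate `x^k` is a measurable function of `ξ¹, …, ξ^{k-1}`, hence
independent of `ξ^k`, so by Fubini the one-step bound integrates against the law of `x^k`.
Unrolling and summing `∑ (1 - γμ)^j ≤ 1/(γμ)` gives the claim. For the measurability, the
stochastic gradient, continuous in `x`, is replaced by a jointly measurable version that agrees
with it for almost every `ξ` simultaneously for all `x`.
-/

open MeasureTheory ProbabilityTheory RealInnerProductSpace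

section Smooth

variable {E : Type*} [NormedAddCommGroup E] [InnerProductSpace ℝ E] [CompleteSpace E]
  {g : E → ℝ} {g' : E → E} {L : ℝ}

lemma hasDerivAt_comp_add_smul_sub (hg : ∀ x, HasGradientAt g (g' x) x) (x y : E) (t : ℝ) :
    HasDerivAt (fun s : ℝ => g (x + s • (y - x))) ⟪g' (x + t • (y - x)), y - x⟫ t := by
  have hline : HasDerivAt (fun s : ℝ => x + s • (y - x)) (y - x) t := by
    simpa using ((hasDerivAt_id t).smul_const (y - x)).const_add x
  have h := (hg _).hasFDerivAt.comp_hasDerivAt t hline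
  simp only [InnerProductSpace.toDual_apply_apply] at h
  exact h

theorem ConvexOn.add_inner_gradient_le (hconv : ConvexOn ℝ Set.univ g)
    (hg : ∀ x, HasGradientAt g (g' x) x) (x y : E) : g x + ⟪g' x, y - x⟫ ≤ g y := by
  have hline : ConvexOn ℝ Set.univ (fun s : ℝ => g (x + s • (y - x))) := by
    simpa [Function.comp_def, AffineMap.lineMap_apply_module', add_comm] using
      hconv.comp_affineMap (AffineMap.lineMap x y)
  have := hline.le_slope_of_hasDerivAt (Set.mem_univ 0) (Set.mem_univ 1) one_pos
    (by simpa using hasDerivAt_comp_add_smul_sub hg x y 0)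
  simp only [slope_def_field, one_smul, add_sub_cancel, zero_smul, add_zero, sub_zero,
    div_one] at this
  linarith

theorem le_add_inner_gradient_add_sq (hg : ∀ x, HasGradientAt g (g' x) x)
    (hlip : ∀ x y, ‖g' x - g' y‖ ≤ L * ‖x - y‖) (x y : E) :
    g y ≤ g x + ⟪g' x, y - x⟫ + L / 2 * ‖y - x‖ ^ 2 := by
  set φ : ℝ → ℝ := fun t => g (x + t • (y - x)) - t * ⟪g' x, y - x⟫ - L / 2 * t ^ 2 * ‖y - x‖ ^ 2
  have hφ : ∀ t, HasDerivAt φ (⟪g' (x + t • (y - x)), y - x⟫ - ⟪g' x, y - x⟫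
      - L * t * ‖y - x‖ ^ 2) t := by
    intro t
    refine (((hasDerivAt_comp_add_smul_sub hg x y t).sub ((hasDerivAt_id t).mul_const _)).sub
      (((hasDerivAt_pow 2 t).const_mul (L / 2)).mul_const (‖y - x‖ ^ 2))).congr_deriv ?_
    ring
  -- the gradient moves by at most `L t ‖y - x‖` along the segment, so `φ` decreases
  have hφ' : ∀ t ∈ interior (Set.Ici (0 : ℝ)), ⟪g' (x + t • (y - x)), y - x⟫ - ⟪g' x, y - x⟫
      - L * t * ‖y - x‖ ^ 2 ≤ 0 := by
    intro t ht
    rw [interior_Ici, Set.mem_Ioi] at ht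
    have hmove : ‖g' (x + t • (y - x)) - g' x‖ ≤ L * t * ‖y - x‖ := by
      simpa [norm_smul, abs_of_pos ht, mul_assoc] using hlip (x + t • (y - x)) x
    suffices ⟪g' (x + t • (y - x)), y - x⟫ - ⟪g' x, y - x⟫ ≤ L * t * ‖y - x‖ ^ 2 by linarith
    calc ⟪g' (x + t • (y - x)), y - x⟫ - ⟪g' x, y - x⟫
        = ⟪g' (x + t • (y - x)) - g' x, y - x⟫ := (inner_sub_left _ _ _).symm
      _ ≤ ‖g' (x + t • (y - x)) - g' x‖ * ‖y - x‖ := real_inner_le_norm _ _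
      _ ≤ L * t * ‖y - x‖ * ‖y - x‖ := by gcongr
      _ = L * t * ‖y - x‖ ^ 2 := by ring
  have hanti := antitoneOn_of_hasDerivWithinAt_nonpos (convex_Ici 0)
    (fun t _ => (hφ t).continuousAt.continuousWithinAt) (fun t _ => (hφ t).hasDerivWithinAt) hφ'
  have h10 : φ 1 ≤ φ 0 := hanti (Set.mem_Ici.2 le_rfl) (Set.mem_Ici.2 zero_le_one) zero_le_one
  have hφ0 : φ 0 = g x := by simp [φ]
  have hφ1 : φ 1 = g y - ⟪g' x, y - x⟫ - L / 2 * ‖y - x‖ ^ 2 := by simp [φ]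
  linarith

theorem norm_sub_gradient_sq_le (hL : 0 < L) (hconv : ConvexOn ℝ Set.univ g)
    (hg : ∀ x, HasGradientAt g (g' x) x) (hlip : ∀ x y, ‖g' x - g' y‖ ≤ L * ‖x - y‖) (x y : E) :
    ‖g' y - g' x‖ ^ 2 ≤ 2 * L * (g y - g x - ⟪g' x, y - x⟫) := by
  set d := g' y - g' x
  -- compare both first-order bounds at the point `z` reached by a gradient step from `y`
  set z := y - L⁻¹ • d
  have hlow := hconv.add_inner_gradient_le hg x z
  have hup := le_add_inner_gradient_add_sq hg hlip y z
  have hzy : z - y = -(L⁻¹ • d) := by simp [z]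
  have hzx : z - x = (y - x) - L⁻¹ • d := by simp only [z]; abel
  rw [hzy, inner_neg_right, inner_smul_right, norm_neg, norm_smul, mul_pow, Real.norm_eq_abs,
    sq_abs] at hup
  rw [hzx, inner_sub_right, inner_smul_right] at hlow
  have hdd : ⟪g' y, d⟫ - ⟪g' x, d⟫ = ‖d‖ ^ 2 := by
    rw [← inner_sub_left, real_inner_self_eq_norm_sq]
  have key : ‖d‖ ^ 2 / (2 * L) ≤ g y - g x - ⟪g' x, y - x⟫ := by
    have : ‖d‖ ^ 2 / (2 * L) = L⁻¹ * (⟪g' y, d⟫ - ⟪g' x, d⟫) - L / 2 * (L⁻¹ ^ 2 * ‖d‖ ^ 2) := by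
      rw [hdd]; field_simp; ring
    linarith
  rwa [div_le_iff₀ (by positivity), mul_comm] at key

end Smooth

section OneStep

variable {E : Type*} [NormedAddCommGroup E] [InnerProductSpace ℝ E]
  {Ξ : Type*} [MeasurableSpace Ξ] {ν : Measure Ξ}

lemma norm_sub_smul_sq (a v : E) (γ : ℝ) :
    ‖a - γ • v‖ ^ 2 = ‖a‖ ^ 2 - 2 * γ * ⟪a, v⟫ + γ ^ 2 * ‖v‖ ^ 2 := by
  rw [norm_sub_sq_real, inner_smul_right, norm_smul, mul_pow, Real.norm_eq_abs, sq_abs]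
  ring

lemma integrable_norm_sub_smul_sq [IsFiniteMeasure ν] {V : Ξ → E} (hV : Integrable V ν)
    (hV2 : Integrable (fun s => ‖V s‖ ^ 2) ν) (a : E) (γ : ℝ) :
    Integrable (fun s => ‖a - γ • V s‖ ^ 2) ν := by
  simp_rw [norm_sub_smul_sq]
  exact ((integrable_const _).sub ((hV.const_inner a).const_mul _)).add (hV2.const_mul _)

variable [CompleteSpace E]

lemma integral_norm_sub_smul_sq [IsProbabilityMeasure ν] {V : Ξ → E} (hV : Integrable V ν)
    (hV2 : Integrable (fun s => ‖V s‖ ^ 2) ν) (a : E) (γ : ℝ) :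
    ∫ s, ‖a - γ • V s‖ ^ 2 ∂ν
      = ‖a‖ ^ 2 - 2 * γ * ⟪a, ∫ s, V s ∂ν⟫ + γ ^ 2 * ∫ s, ‖V s‖ ^ 2 ∂ν := by
  simp_rw [norm_sub_smul_sq]
  have hinner : Integrable (fun s => 2 * γ * ⟪a, V s⟫) ν := (hV.const_inner a).const_mul _
  rw [integral_add ?_ (hV2.const_mul _), integral_sub (integrable_const _) hinner, integral_const,
    integral_const_mul, integral_const_mul, integral_inner hV]
  · simp
  · exact (integrable_const _).sub hinner

variable {f : E → Ξ → ℝ} {G : E → Ξ → E} {L μ : ℝ} {xstar : E}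

omit [CompleteSpace E] in
lemma integrable_norm_sgd_step_sub_sq [IsFiniteMeasure ν] {w : E}
    (hGint : Integrable (fun ξ => G w ξ) ν) (hGsqint : Integrable (fun ξ => ‖G w ξ‖ ^ 2) ν)
    (γ : ℝ) : Integrable (fun ξ => ‖w - γ • G w ξ - xstar‖ ^ 2) ν := by
  simpa only [sub_right_comm] using integrable_norm_sub_smul_sq hGint hGsqint (w - xstar) γ

theorem integral_le_integral_of_integral_gradient_eq_zero
    (hconv : ∀ ξ, ConvexOn ℝ Set.univ (fun x => f x ξ))
    (hgrad : ∀ ξ x, HasGradientAt (fun y => f y ξ) (G x ξ) x)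
    (hfint : ∀ x, Integrable (fun ξ => f x ξ) ν) (hGint : Integrable (fun ξ => G xstar ξ) ν)
    (hmin : ∫ ξ, G xstar ξ ∂ν = 0) (w : E) :
    ∫ ξ, f xstar ξ ∂ν ≤ ∫ ξ, f w ξ ∂ν := by
  have hinner : Integrable (fun ξ => ⟪w - xstar, G xstar ξ⟫) ν := hGint.const_inner _
  have : ∫ ξ, (f xstar ξ + ⟪w - xstar, G xstar ξ⟫) ∂ν ≤ ∫ ξ, f w ξ ∂ν :=
    integral_mono ((hfint xstar).add hinner) (hfint w) fun ξ => by
    simpa [real_inner_comm] using (hconv ξ).add_inner_gradient_le (hgrad ξ) xstar w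
  rwa [integral_add (hfint xstar) hinner, integral_inner hGint, hmin, inner_zero_right,
    add_zero] at this

theorem integral_norm_sq_gradient_le (hL : 0 < L)
    (hconv : ∀ ξ, ConvexOn ℝ Set.univ (fun x => f x ξ))
    (hgrad : ∀ ξ x, HasGradientAt (fun y => f y ξ) (G x ξ) x)
    (hlip : ∀ ξ x y, ‖G x ξ - G y ξ‖ ≤ L * ‖x - y‖)
    (hfint : ∀ x, Integrable (fun ξ => f x ξ) ν) (hGint : Integrable (fun ξ => G xstar ξ) ν)
    (hGsqint : ∀ x, Integrable (fun ξ => ‖G x ξ‖ ^ 2) ν) (hmin : ∫ ξ, G xstar ξ ∂ν = 0) (w : E) :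
    ∫ ξ, ‖G w ξ‖ ^ 2 ∂ν
      ≤ 4 * L * (∫ ξ, f w ξ ∂ν - ∫ ξ, f xstar ξ ∂ν) + 2 * ∫ ξ, ‖G xstar ξ‖ ^ 2 ∂ν := by
  have hpt : ∀ ξ, ‖G w ξ‖ ^ 2
      ≤ 4 * L * (f w ξ - f xstar ξ - ⟪w - xstar, G xstar ξ⟫) + 2 * ‖G xstar ξ‖ ^ 2 := by
    intro ξ
    have hcoco := norm_sub_gradient_sq_le hL (hconv ξ) (hgrad ξ) (hlip ξ) xstar w
    rw [real_inner_comm] at hcoco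
    have htri : ‖G w ξ‖ ≤ ‖G w ξ - G xstar ξ‖ + ‖G xstar ξ‖ := norm_le_norm_sub_add _ _
    nlinarith [sq_nonneg (‖G w ξ - G xstar ξ‖ - ‖G xstar ξ‖), norm_nonneg (G w ξ)]
  have hgap : Integrable (fun ξ => f w ξ - f xstar ξ) ν := (hfint w).sub (hfint xstar)
  have hinner : Integrable (fun ξ => ⟪w - xstar, G xstar ξ⟫) ν := hGint.const_inner _
  have hlin : Integrable (fun ξ => 4 * L * (f w ξ - f xstar ξ - ⟪w - xstar, G xstar ξ⟫)) ν :=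
    (hgap.sub hinner).const_mul _
  have hsq : Integrable (fun ξ => 2 * ‖G xstar ξ‖ ^ 2) ν := (hGsqint xstar).const_mul _
  have : ∫ ξ, ‖G w ξ‖ ^ 2 ∂ν ≤ ∫ ξ, (4 * L * (f w ξ - f xstar ξ - ⟪w - xstar, G xstar ξ⟫)
      + 2 * ‖G xstar ξ‖ ^ 2) ∂ν := integral_mono (hGsqint w) (hlin.add hsq) hpt
  rwa [integral_add hlin hsq, integral_const_mul, integral_const_mul, integral_sub hgap hinner,
    integral_sub (hfint w) (hfint xstar), integral_inner hGint, hmin, inner_zero_right,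
    sub_zero] at this

theorem integral_norm_sgd_step_sub_sq_le [IsProbabilityMeasure ν] (hL : 0 < L)
    (hconv : ∀ ξ, ConvexOn ℝ Set.univ (fun x => f x ξ))
    (hgrad : ∀ ξ x, HasGradientAt (fun y => f y ξ) (G x ξ) x)
    (hlip : ∀ ξ x y, ‖G x ξ - G y ξ‖ ≤ L * ‖x - y‖)
    (hfint : ∀ x, Integrable (fun ξ => f x ξ) ν) (hGint : ∀ x, Integrable (fun ξ => G x ξ) ν)
    (hGsqint : ∀ x, Integrable (fun ξ => ‖G x ξ‖ ^ 2) ν) (hmin : ∫ ξ, G xstar ξ ∂ν = 0) {w : E}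
    (hsc : ∫ ξ, f xstar ξ ∂ν
      ≥ ∫ ξ, f w ξ ∂ν + ⟪∫ ξ, G w ξ ∂ν, xstar - w⟫ + μ / 2 * ‖xstar - w‖ ^ 2)
    {γ : ℝ} (hγ0 : 0 < γ) (hγ : γ ≤ 1 / (2 * L)) :
    ∫ ξ, ‖w - γ • G w ξ - xstar‖ ^ 2 ∂ν
      ≤ (1 - γ * μ) * ‖w - xstar‖ ^ 2 + 2 * γ ^ 2 * ∫ ξ, ‖G xstar ξ‖ ^ 2 ∂ν := by
  have hgap := integral_le_integral_of_integral_gradient_eq_zero hconv hgrad hfint (hGint xstar)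
    hmin w
  have hmoment :=
    integral_norm_sq_gradient_le hL hconv hgrad hlip hfint (hGint xstar) hGsqint hmin w
  have hstep : 2 * γ * L ≤ 1 := by
    rw [le_div_iff₀ (by positivity)] at hγ; linarith
  simp_rw [sub_right_comm w _ xstar]
  rw [integral_norm_sub_smul_sq (hGint w) (hGsqint w)]
  rw [show xstar - w = -(w - xstar) by abel, inner_neg_right, norm_neg, real_inner_comm] at hsc
  nlinarith [mul_nonneg (mul_nonneg hγ0.le (sub_nonneg.2 hstep)) (sub_nonneg.2 hgap),
    mul_le_mul_of_nonneg_left hmoment (sq_nonneg γ)]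

theorem le_two_mul_of_strongConvexity [Nontrivial E] [IsProbabilityMeasure ν]
    (hconv : ∀ ξ, ConvexOn ℝ Set.univ (fun x => f x ξ))
    (hgrad : ∀ ξ x, HasGradientAt (fun y => f y ξ) (G x ξ) x)
    (hlip : ∀ ξ x y, ‖G x ξ - G y ξ‖ ≤ L * ‖x - y‖)
    (hfint : ∀ x, Integrable (fun ξ => f x ξ) ν) (hGint : ∀ x, Integrable (fun ξ => G x ξ) ν)
    (hmin : ∫ ξ, G xstar ξ ∂ν = 0)
    (hsc : ∀ x, ∫ ξ, f xstar ξ ∂ν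
      ≥ ∫ ξ, f x ξ ∂ν + ⟪∫ ξ, G x ξ ∂ν, xstar - x⟫ + μ / 2 * ‖xstar - x‖ ^ 2) :
    μ ≤ 2 * L := by
  obtain ⟨w, hw⟩ := exists_ne xstar
  have hpos : 0 < ‖w - xstar‖ := norm_pos_iff.2 (sub_ne_zero.2 hw)
  have hgap := integral_le_integral_of_integral_gradient_eq_zero hconv hgrad hfint (hGint xstar)
    hmin w
  have hmean : ‖∫ ξ, G w ξ ∂ν‖ ≤ L * ‖w - xstar‖ := by
    calc ‖∫ ξ, G w ξ ∂ν‖ = ‖∫ ξ, (G w ξ - G xstar ξ) ∂ν‖ := by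
          rw [integral_sub (hGint w) (hGint xstar), hmin, sub_zero]
      _ ≤ L * ‖w - xstar‖ := by
          simpa using norm_integral_le_of_norm_le_const (μ := ν) (ae_of_all _ (hlip · w xstar))
  have hinner : ⟪∫ ξ, G w ξ ∂ν, w - xstar⟫ ≤ L * ‖w - xstar‖ ^ 2 := by
    calc ⟪∫ ξ, G w ξ ∂ν, w - xstar⟫ ≤ ‖∫ ξ, G w ξ ∂ν‖ * ‖w - xstar‖ := real_inner_le_norm _ _
      _ ≤ L * ‖w - xstar‖ * ‖w - xstar‖ := by gcongr
      _ = L * ‖w - xstar‖ ^ 2 := by ring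
  have h := hsc w
  rw [show xstar - w = -(w - xstar) by abel, inner_neg_right, norm_neg] at h
  nlinarith [mul_pos hpos hpos]

end OneStep

open Filter TopologicalSpace in
theorem exists_stronglyMeasurable_uncurry_ae_forall_eq {ι α β : Type*} [TopologicalSpace ι]
    [MetrizableSpace ι] [SecondCountableTopology ι] [MeasurableSpace ι] [OpensMeasurableSpace ι]
    [MeasurableSpace α] {ν : Measure α} [TopologicalSpace β] [PseudoMetrizableSpace β] [Zero β]
    {u : ι → α → β} (hcont : ∀ a, Continuous fun i => u i a)
    (hmeas : ∀ i, AEStronglyMeasurable (u i) ν) :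
    ∃ v : ι → α → β, StronglyMeasurable (Function.uncurry v) ∧ ∀ᵐ a ∂ν, ∀ i, v i a = u i a := by
  obtain ⟨D, hDc, hD⟩ := exists_countable_dense ι
  -- off a null set, `u` agrees with measurable versions on the countable dense set `D`, and
  -- continuity in `i` propagates measurability from `D` to all of `ι`
  obtain ⟨S, hSae, hSmeas, hS⟩ := Eventually.exists_measurable_mem
    ((ae_ball_iff hDc).2 fun d _ => (hmeas d).ae_eq_mk)
  set v : ι → α → β := fun i => S.indicator (u i)
  have hvcont : ∀ a, Continuous fun i => v i a := by
    intro a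
    by_cases ha : a ∈ S
    · simpa [v, Set.indicator_of_mem ha] using hcont a
    · simpa [v, Set.indicator_of_notMem ha] using continuous_const
  have hvD : ∀ d ∈ D, v d = S.indicator ((hmeas d).mk _) := by
    intro d hd
    ext a
    by_cases ha : a ∈ S
    · simp [v, Set.indicator_of_mem ha, hS a ha d hd]
    · simp [v, Set.indicator_of_notMem ha]
  have hvmeas : ∀ i, StronglyMeasurable (v i) := by
    intro i
    obtain ⟨d, hdD, hdi⟩ := mem_closure_iff_seq_limit.1 (hD i)
    refine stronglyMeasurable_of_tendsto atTop (f := fun n => v (d n)) (fun n => ?_)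
      (tendsto_pi_nhds.2 fun a => ((hvcont a).tendsto i).comp hdi)
    rw [hvD _ (hdD n)]
    exact (hmeas _).stronglyMeasurable_mk.indicator hSmeas
  refine ⟨v, stronglyMeasurable_uncurry_of_continuous_of_stronglyMeasurable hvcont hvmeas, ?_⟩
  filter_upwards [hSae] with a ha i
  simp [v, Set.indicator_of_mem ha]

section Independence

variable {Ω E Ξ : Type*} {mΩ : MeasurableSpace Ω} [MeasurableSpace E] [mΞ : MeasurableSpace Ξ]
  {P : Measure Ω}

theorem ProbabilityTheory.IndepFun.integrable_and_integral_comp_le [IsFiniteMeasure P]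
    {Z : Ω → E} {ξ : Ω → Ξ} (hZ : Measurable Z) (hξ : Measurable ξ) (hind : IndepFun Z ξ P)
    {g : E → Ξ → ℝ} (hg : Measurable (Function.uncurry g)) (hg0 : ∀ z s, 0 ≤ g z s)
    (hgint : ∀ z, Integrable (g z) (P.map ξ)) {h : E → ℝ} (hh : Measurable h)
    (hhZ : Integrable (fun ω => h (Z ω)) P) (hgh : ∀ z, ∫ s, g z s ∂(P.map ξ) ≤ h z) :
    Integrable (fun ω => g (Z ω) (ξ ω)) P ∧ ∫ ω, g (Z ω) (ξ ω) ∂P ≤ ∫ ω, h (Z ω) ∂P := by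
  have hpair : Measurable fun ω => (Z ω, ξ ω) := hZ.prodMk hξ
  have hlaw : P.map (fun ω => (Z ω, ξ ω)) = (P.map Z).prod (P.map ξ) :=
    (indepFun_iff_map_prod_eq_prod_map_map hZ.aemeasurable hξ.aemeasurable).1 hind
  have hhint : Integrable h (P.map Z) :=
    (integrable_map_measure hh.aestronglyMeasurable hZ.aemeasurable).2 hhZ
  have hprod : Integrable (Function.uncurry g) ((P.map Z).prod (P.map ξ)) := by
    refine (integrable_prod_iff hg.aestronglyMeasurable).2 ⟨ae_of_all _ hgint, ?_⟩
    refine hhint.mono' hg.stronglyMeasurable.norm.integral_prod_right'.aestronglyMeasurable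
      (ae_of_all _ fun z => ?_)
    simp only [Function.uncurry_apply_pair, Real.norm_eq_abs, abs_of_nonneg (hg0 _ _)]
    rw [abs_of_nonneg (integral_nonneg (hg0 z))]
    exact hgh z
  refine ⟨(integrable_map_measure hg.aestronglyMeasurable hpair.aemeasurable).1 (hlaw ▸ hprod), ?_⟩
  calc ∫ ω, g (Z ω) (ξ ω) ∂P = ∫ p, Function.uncurry g p ∂(P.map fun ω => (Z ω, ξ ω)) :=
        (integral_map hpair.aemeasurable hg.aestronglyMeasurable).symm
    _ = ∫ z, ∫ s, g z s ∂(P.map ξ) ∂(P.map Z) := by rw [hlaw, integral_prod _ hprod]; rfl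
    _ ≤ ∫ z, h z ∂(P.map Z) := integral_mono hprod.integral_prod_left hhint hgh
    _ = ∫ ω, h (Z ω) ∂P := integral_map hZ.aemeasurable hh.aestronglyMeasurable

theorem ProbabilityTheory.iIndepFun.indepFun_of_measurable_iSup_Iic {ι β : Type*} [LinearOrder ι]
    [MeasurableSpace β] {ξ : ι → Ω → Ξ} (hξ : ∀ i, Measurable (ξ i)) (hind : iIndepFun ξ P)
    {k l : ι} (hkl : k < l) {Y : Ω → β} (hY : Measurable[⨆ i ∈ Set.Iic k, mΞ.comap (ξ i)] Y) :
    IndepFun Y (ξ l) P := by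
  have hdisj : Disjoint (Set.Iic k) {l} := Set.disjoint_singleton_right.2 (not_le.2 hkl)
  have := indep_iSup_of_disjoint (fun i => (hξ i).comap_le) hind.iIndep hdisj
  rw [IndepFun_iff_Indep]
  exact indep_of_indep_of_le this hY.comap_le (le_iSup₂ (f := fun i (_ : i ∈ ({l} : Set ι)) =>
    mΞ.comap (ξ i)) l rfl)

end Independence

section RandomIteration

variable {Ω E Ξ : Type*} {mΩ : MeasurableSpace Ω} [mΞ : MeasurableSpace Ξ]
  {T : E → Ξ → E} {ξ : ℕ → Ω → Ξ} {x₀ : E}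

def iterateRandom (T : E → Ξ → E) (x₀ : E) (ξ : ℕ → Ω → Ξ) : ℕ → Ω → E
  | 0 => fun _ => x₀
  | k + 1 => fun ω => T (iterateRandom T x₀ ξ k ω) (ξ (k + 1) ω)

theorem ae_eq_iterateRandom {P : Measure Ω} {ν : Measure Ξ} {T' : E → Ξ → E}
    (hT : ∀ᵐ s ∂ν, ∀ w, T w s = T' w s) (hξ : ∀ k, Measurable (ξ k))
    (hlaw : ∀ k, P.map (ξ k) = ν) {x : ℕ → Ω → E} (hx1 : ∀ ω, x 1 ω = x₀)
    (hiter : ∀ k ≥ 1, ∀ ω, x (k + 1) ω = T' (x k ω) (ξ k ω)) :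
    ∀ᵐ ω ∂P, ∀ k, x (k + 1) ω = iterateRandom T x₀ ξ k ω := by
  have hsample : ∀ᵐ ω ∂P, ∀ k, ∀ w, T w (ξ k ω) = T' w (ξ k ω) :=
    ae_all_iff.2 fun k => ae_of_ae_map (hξ k).aemeasurable (hlaw k ▸ hT)
  filter_upwards [hsample] with ω hω k
  induction k with
  | zero => exact hx1 ω
  | succ k ih => rw [hiter (k + 1) k.succ_pos, ih, ← hω]; rfl

variable [MeasurableSpace E]

theorem measurable_iterateRandom (hT : Measurable (Function.uncurry T)) (k : ℕ) :
    Measurable[⨆ i ∈ Set.Iic k, mΞ.comap (ξ i)] (iterateRandom T x₀ ξ k) := by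
  induction k with
  | zero => exact measurable_const
  | succ k ih =>
    have hmono : ⨆ i ∈ Set.Iic k, mΞ.comap (ξ i) ≤ ⨆ i ∈ Set.Iic (k + 1), mΞ.comap (ξ i) :=
      biSup_mono fun i hi => Set.Iic_subset_Iic.2 k.le_succ hi
    have hnew : Measurable[⨆ i ∈ Set.Iic (k + 1), mΞ.comap (ξ i)] (ξ (k + 1)) :=
      Measurable.of_comap_le (le_iSup₂ (f := fun i (_ : i ∈ Set.Iic (k + 1)) => mΞ.comap (ξ i))
        (k + 1) (Set.mem_Iic.2 le_rfl))
    exact hT.comp ((ih.mono hmono le_rfl).prodMk hnew)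

theorem integrable_and_integral_iterateRandom_le {P : Measure Ω} [IsProbabilityMeasure P]
    (hT : Measurable (Function.uncurry T)) (hξ : ∀ k, Measurable (ξ k)) (hind : iIndepFun ξ P)
    {ν : Measure Ξ} (hlaw : ∀ k, P.map (ξ k) = ν) {V : E → ℝ} (hV : Measurable V)
    (hV0 : ∀ w, 0 ≤ V w) (hVT : ∀ w, Integrable (fun s => V (T w s)) ν) {r c : ℝ} (hr : 0 ≤ r)
    (hdrift : ∀ w, ∫ s, V (T w s) ∂ν ≤ r * V w + c) (x₀ : E) (k : ℕ) :
    Integrable (fun ω => V (iterateRandom T x₀ ξ k ω)) P ∧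
      ∫ ω, V (iterateRandom T x₀ ξ k ω) ∂P ≤ r ^ k * V x₀ + c * ∑ j ∈ Finset.range k, r ^ j := by
  induction k with
  | zero => simp [iterateRandom]
  | succ k ih =>
    obtain ⟨hint, hle⟩ := ih
    have hpast := measurable_iterateRandom (x₀ := x₀) (ξ := ξ) hT k
    have hZ : Measurable (iterateRandom T x₀ ξ k) :=
      hpast.mono (iSup₂_le fun i _ => (hξ i).comap_le) le_rfl
    obtain ⟨hint', hle'⟩ := (hind.indepFun_of_measurable_iSup_Iic hξ k.lt_succ_self hpast
      ).integrable_and_integral_comp_le hZ (hξ (k + 1)) (g := fun z s => V (T z s)) (hV.comp hT)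
      (fun z s => hV0 _)
      (by simpa [hlaw] using hVT) ((hV.const_mul r).add_const c)
      ((hint.const_mul r).add (integrable_const c)) (by simpa [hlaw] using hdrift)
    refine ⟨hint', hle'.trans ?_⟩
    rw [integral_add (hint.const_mul r) (integrable_const c), integral_const_mul]
    calc r * ∫ ω, V (iterateRandom T x₀ ξ k ω) ∂P + ∫ _, c ∂P
        ≤ r * (r ^ k * V x₀ + c * ∑ j ∈ Finset.range k, r ^ j) + c := by
          simp only [integral_const, probReal_univ, one_smul]; gcongr
      _ = r ^ (k + 1) * V x₀ + c * ∑ j ∈ Finset.range (k + 1), r ^ j := by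
          rw [geom_sum_succ]; ring

theorem integral_le_of_drift {P : Measure Ω} [IsProbabilityMeasure P] {T' : E → Ξ → E}
    (hT : Measurable (Function.uncurry T)) {ν : Measure Ξ} (hTT' : ∀ᵐ s ∂ν, ∀ w, T w s = T' w s)
    (hξ : ∀ k, Measurable (ξ k)) (hind : iIndepFun ξ P) (hlaw : ∀ k, P.map (ξ k) = ν)
    {x : ℕ → Ω → E} (hx1 : ∀ ω, x 1 ω = x₀)
    (hiter : ∀ k ≥ 1, ∀ ω, x (k + 1) ω = T' (x k ω) (ξ k ω)) {V : E → ℝ} (hV : Measurable V)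
    (hV0 : ∀ w, 0 ≤ V w) (hVT : ∀ w, Integrable (fun s => V (T' w s)) ν) {r c : ℝ} (hr : 0 ≤ r)
    (hdrift : ∀ w, ∫ s, V (T' w s) ∂ν ≤ r * V w + c) (k : ℕ) :
    ∫ ω, V (x (k + 1) ω) ∂P ≤ r ^ k * V x₀ + c * ∑ j ∈ Finset.range k, r ^ j := by
  have hVT' : ∀ w, (fun s => V (T w s)) =ᵐ[ν] fun s => V (T' w s) :=
    fun w => hTT'.mono fun s hs => congrArg V (hs w)
  refine le_of_eq_of_le (integral_congr_ae ?_) (integrable_and_integral_iterateRandom_le hT hξ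
    hind hlaw hV hV0 (fun w => (hVT w).congr (hVT' w).symm) hr
    (fun w => (integral_congr_ae (hVT' w)).trans_le (hdrift w)) x₀ k).2
  filter_upwards [ae_eq_iterateRandom hTT' hξ hlaw hx1 hiter] with ω hω
  rw [hω k]

end RandomIteration

lemma geom_sum_one_sub_le_inv {a : ℝ} (ha : 0 < a) (ha1 : 0 ≤ 1 - a) (N : ℕ) :
    ∑ j ∈ Finset.range N, (1 - a) ^ j ≤ 1 / a := by
  have := geom_sum_Ico_le_of_lt_one (m := 0) (n := N) ha1 (by linarith)
  rwa [← Finset.range_eq_Ico, pow_zero, sub_sub_cancel] at this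

theorem sgd_iterated_contraction_general
    {n : ℕ} {Ξ : Type*} [MeasurableSpace Ξ]
    {Ω : Type*} [MeasurableSpace Ω] (P : Measure Ω) [IsProbabilityMeasure P]
    (ν : Measure Ξ) [IsProbabilityMeasure ν]
    (f : EuclideanSpace ℝ (Fin n) → Ξ → ℝ)
    (G : EuclideanSpace ℝ (Fin n) → Ξ → EuclideanSpace ℝ (Fin n))
    (L μ : ℝ) (hL : 0 < L) (hμ : 0 < μ)
    (hconv : ∀ ξ, ConvexOn ℝ Set.univ (fun x => f x ξ))
    (hgrad : ∀ ξ x, HasGradientAt (fun y => f y ξ) (G x ξ) x)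
    (hlip : ∀ ξ x y, ‖G x ξ - G y ξ‖ ≤ L * ‖x - y‖)
    (F : EuclideanSpace ℝ (Fin n) → ℝ) (hF : ∀ x, F x = ∫ ξ, f x ξ ∂ν)
    (hfint : ∀ x, Integrable (fun ξ => f x ξ) ν)
    (hGint : ∀ x, Integrable (fun ξ => G x ξ) ν)
    (hGsqint : ∀ x, Integrable (fun ξ => ‖G x ξ‖ ^ 2) ν)
    (xstar : EuclideanSpace ℝ (Fin n)) (hmin : ∫ ξ, G xstar ξ ∂ν = 0)
    (hsc : ∀ x, F xstar ≥ F x + ⟪∫ ξ, G x ξ ∂ν, xstar - x⟫ + μ / 2 * ‖xstar - x‖ ^ 2)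
    (σstar2 : ℝ) (hσ : σstar2 = ∫ ξ, ‖G xstar ξ‖ ^ 2 ∂ν)
    (γ : ℝ) (hγ0 : 0 < γ) (hγ : γ ≤ 1 / (2 * L))
    (ξs : ℕ → Ω → Ξ) (hmeas : ∀ k, Measurable (ξs k))
    (hindep : iIndepFun ξs P)
    (hdist : ∀ k, P.map (ξs k) = ν)
    (N : ℕ)
    (x : ℕ → Ω → EuclideanSpace ℝ (Fin n)) (x1 : EuclideanSpace ℝ (Fin n))
    (hx1 : ∀ ω, x 1 ω = x1)
    (hiter : ∀ k ≥ 1, ∀ ω, x (k + 1) ω = x k ω - γ • G (x k ω) (ξs k ω)) :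
    (∫ ω, ‖x (N + 1) ω - xstar‖ ^ 2 ∂P)
      ≤ (1 - γ * μ) ^ N * ‖x1 - xstar‖ ^ 2 + 2 * γ * σstar2 / μ := by
  subst hσ
  rcases subsingleton_or_nontrivial (EuclideanSpace ℝ (Fin n)) with hE | hE
  · simp [norm_eq_zero.2 (Subsingleton.elim _ (0 : EuclideanSpace ℝ (Fin n)))]
  simp only [hF] at hsc
  have hr : 0 ≤ 1 - γ * μ := by
    have := le_two_mul_of_strongConvexity hconv hgrad hlip hfint hGint hmin hsc
    rw [le_div_iff₀ (by positivity)] at hγ; nlinarith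
  obtain ⟨G', hG'meas, hG'⟩ := exists_stronglyMeasurable_uncurry_ae_forall_eq
    (fun ξ => (LipschitzWith.of_dist_le' (by simpa [dist_eq_norm] using hlip ξ)).continuous)
    (fun x => (hGint x).aestronglyMeasurable)
  have hbound := integral_le_of_drift (T := fun w ξ => w - γ • G' w ξ)
    (measurable_fst.sub (hG'meas.measurable.const_smul γ)) (hG'.mono fun ξ hξ w => by simp [hξ])
    hmeas hindep hdist hx1 hiter (V := fun w => ‖w - xstar‖ ^ 2) (by fun_prop)
    (fun w => by positivity) (fun w => integrable_norm_sgd_step_sub_sq (hGint w) (hGsqint w) γ) hr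
    (fun w => integral_norm_sgd_step_sub_sq_le hL hconv hgrad hlip hfint hGint hGsqint hmin (hsc w)
      hγ0 hγ) N
  calc ∫ ω, ‖x (N + 1) ω - xstar‖ ^ 2 ∂P
      ≤ (1 - γ * μ) ^ N * ‖x1 - xstar‖ ^ 2
          + 2 * γ ^ 2 * (∫ ξ, ‖G xstar ξ‖ ^ 2 ∂ν) * (1 / (γ * μ)) := by
        refine hbound.trans ?_
        gcongr
        exact geom_sum_one_sub_le_inv (by positivity) hr N
    _ = (1 - γ * μ) ^ N * ‖x1 - xstar‖ ^ 2 + 2 * γ * (∫ ξ, ‖G xstar ξ‖ ^ 2 ∂ν) / μ := by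
        field_simp

/-- Iterated SGD contraction: with i.i.d. samples and `γ ≤ 1/(2L)`,
`E‖x^{N+1} - x*‖² ≤ (1-γμ)^N ‖x¹ - x*‖² + 2γσ*²/μ`. -/
theorem sgd_iterated_contraction
    {n : ℕ} {Ξ : Type*} [MeasurableSpace Ξ]
    {Ω : Type*} [MeasurableSpace Ω] (P : Measure Ω) [IsProbabilityMeasure P]
    (ν : Measure Ξ) [IsProbabilityMeasure ν]
    (f : EuclideanSpace ℝ (Fin n) → Ξ → ℝ)
    (G : EuclideanSpace ℝ (Fin n) → Ξ → EuclideanSpace ℝ (Fin n))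
    (L μ : ℝ) (hL : 0 < L) (hμ : 0 < μ)
    (hconv : ∀ ξ, ConvexOn ℝ Set.univ (fun x => f x ξ))
    (hgrad : ∀ ξ x, HasGradientAt (fun y => f y ξ) (G x ξ) x)
    (hlip : ∀ ξ x y, ‖G x ξ - G y ξ‖ ≤ L * ‖x - y‖)
    (F : EuclideanSpace ℝ (Fin n) → ℝ) (hF : ∀ x, F x = ∫ ξ, f x ξ ∂ν)
    (hfint : ∀ x, Integrable (fun ξ => f x ξ) ν)
    (hGint : ∀ x, Integrable (fun ξ => G x ξ) ν)
    (hGsqint : ∀ x, Integrable (fun ξ => ‖G x ξ‖ ^ 2) ν)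
    (xstar : EuclideanSpace ℝ (Fin n)) (hmin : ∫ ξ, G xstar ξ ∂ν = 0)
    (hsc : ∀ x, F xstar ≥ F x + ⟪∫ ξ, G x ξ ∂ν, xstar - x⟫ + μ / 2 * ‖xstar - x‖ ^ 2)
    (σstar2 : ℝ) (hσ : σstar2 = ∫ ξ, ‖G xstar ξ‖ ^ 2 ∂ν)
    (γ : ℝ) (hγ0 : 0 < γ) (hγ : γ ≤ 1 / (2 * L))
    (ξs : ℕ → Ω → Ξ) (hmeas : ∀ k, Measurable (ξs k))
    (hindep : iIndepFun ξs P)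
    (hdist : ∀ k, P.map (ξs k) = ν)
    (N : ℕ) (hN : 0 < N)
    (x : ℕ → Ω → EuclideanSpace ℝ (Fin n)) (x1 : EuclideanSpace ℝ (Fin n))
    (hx1 : ∀ ω, x 1 ω = x1)
    (hiter : ∀ k ≥ 1, ∀ ω, x (k + 1) ω = x k ω - γ • G (x k ω) (ξs k ω)) :
    (∫ ω, ‖x (N + 1) ω - xstar‖ ^ 2 ∂P)
      ≤ (1 - γ * μ) ^ N * ‖x1 - xstar‖ ^ 2 + 2 * γ * σstar2 / μ :=
  sgd_iterated_contraction_general P ν f G L μ hL hμ hconv hgrad hlip F hF hfint hGint hGsqint xstar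
    hmin hsc σstar2 hσ γ hγ0 hγ ξs hmeas hindep hdist N x x1 hx1 hiter
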